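/- arXiv:2204.13179 — 2 statements merged into one kernel-verified Lean document; each statement's English description precedes it below -/
import Mathlib

section
/- Let 𝒳 ⊆ ℝ be a countable set, m ∈ ℕ, Θ a Borel subset of ℝ^m, and Q a probability measure on Θ with ∫_Θ ‖θ‖ dQ(θ) < ∞. For each θ ∈ Θ let p^θ be a transition matrix on 𝒳 such that θ ↦ p^θ i j is Borel measurable for every i, j ∈ 𝒳, and let P^θ be a probability measure on the trajectory space Ω = 𝒳^ℕ under which the coordinate process (X_n)_{n≥0} is a homogeneous Markov chain with transition matrix p^θ, with θ ↦ P^θ(C) Borel measurable for every measurable cylinder set C ⊆ Ω. Let P be the probability measure on Θ × Ω given by P(dθ, dω) = Q(dθ) P^θ(dω). Assume: (i) distinguishability: for every θ ≠ θ' in Θ there exist i, j ∈ 𝒳 with p^θ i j ≠ p^{θ'} i j; (ii) for each θ ∈ Θ the chain is ergodic with limiting invariant distribution π^θ, and π^θ i > 0 for every i ∈ 𝒳; (iii) weak law of large numbers for pairs: for each θ ∈ Θ and all i, j ∈ 𝒳, (1/T) ∑_{s=0}^{T-1} 1(X_s = i, X_{s+1} = j) converges in P^θ-probability to π^θ(i)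 · p^θ i j as T → ∞. Then the Bayesian estimator θ̂_n = E_P[θ | σ(X_0, …, X_n)] converges to θ, P-almost surely on Θ × Ω, as n → ∞. -/
/-!
By Lévy's upward theorem, `E[θ | X₀, …, Xₙ]` converges almost surely to `E[θ | σ(X)]`, so it
suffices that `θ` is almost surely a measurable function of the trajectory. The weak law of large
numbers makes the pair frequencies converge in `P`-probability to `π^θ(i) p^θ(i, j)`; along a
subsequence they converge almost surely, so these limits are measurable functions of the
trajectory. The map `θ ↦ (π^θ(i) p^θ(i, j))ᵢⱼ` is measurable (`π^θ` is the limit of the `t`-step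
transition probabilities) and, by positivity of `π^θ` and distinguishability, injective on `Θ`;
an injective measurable map on a standard Borel space has a measurable left inverse, which
recovers `θ` from the trajectory.
-/


open MeasureTheory ProbabilityTheory Filter Topology
open scoped Classical

noncomputable section

/-- `p` is a (one-step) transition matrix on `𝒳`. -/
def IsTransMatrix {𝒳 : Type*} (p : 𝒳 → 𝒳 → ℝ) : Prop :=
  (∀ i j, 0 ≤ p i j) ∧ ∀ i, ∑' j, p i j = 1

/-- `π` is a probability vector on `𝒳`. -/
def IsProbVector {𝒳 : Type*} (π : 𝒳 → ℝ) : Prop :=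
  (∀ i, 0 ≤ π i) ∧ ∑' i, π i = 1

/-- `π` is invariant for `p`. -/
def IsInvariantVec {𝒳 : Type*} (p : 𝒳 → 𝒳 → ℝ) (π : 𝒳 → ℝ) : Prop :=
  ∀ j, π j = ∑' i, π i * p i j

/-- `t`-step transition matrix. -/
def matPow {𝒳 : Type*} (p : 𝒳 → 𝒳 → ℝ) : ℕ → 𝒳 → 𝒳 → ℝ
  | 0 => fun i j => if i = j then (1 : ℝ) else 0
  | n + 1 => fun i j => ∑' k, matPow p n i k * p k j

/-- Ergodicity: from every initial distribution, the time-`t` distribution converges to `π`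
in total variation. -/
def IsErgodic {𝒳 : Type*} (p : 𝒳 → 𝒳 → ℝ) (π : 𝒳 → ℝ) : Prop :=
  ∀ μ0 : 𝒳 → ℝ, IsProbVector μ0 →
    Tendsto (fun t => ∑' j, |(∑' i, μ0 i * matPow p t i j) - π j|) atTop (𝓝 0)

/-- `X` is a homogeneous Markov chain with transition matrix `p` under `P`. -/
def IsMarkovChain {𝒳 Ω : Type*} [MeasurableSpace Ω] (P : Measure Ω)
    (X : ℕ → Ω → 𝒳) (p : 𝒳 → 𝒳 → ℝ) : Prop :=
  ∀ (n : ℕ) (x : Fin (n + 1) → 𝒳) (k : 𝒳),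
    P {ω | (∀ t : Fin (n + 1), X t ω = x t) ∧ X (n + 1) ω = k} =
      ENNReal.ofReal (p (x (Fin.last n)) k) * P {ω | ∀ t : Fin (n + 1), X t ω = x t}

/-- Convergence in probability to a constant. -/
def TendstoInProb {Ω : Type*} [MeasurableSpace Ω] (P : Measure Ω)
    (Z : ℕ → Ω → ℝ) (c : ℝ) : Prop :=
  ∀ ε > 0, Tendsto (fun T => P {ω | ε < |Z T ω - c|}) atTop (𝓝 0)

/-- Transition matrix of the pair chain `Y_n = (X_n, X_{n+1})`. -/
def pairTM {𝒳 : Type*} (p : 𝒳 → 𝒳 → ℝ) : 𝒳 × 𝒳 → 𝒳 × 𝒳 → ℝ :=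
  fun y z => if y.2 = z.1 then p z.1 z.2 else 0

namespace IsTransMatrix

variable {𝒳 : Type*} {p q : 𝒳 → 𝒳 → ℝ}

theorem summable_row (hp : IsTransMatrix p) (i : 𝒳) : Summable (p i) := by
  by_contra h
  simpa [tsum_eq_zero_of_not_summable h] using hp.2 i

theorem le_one (hp : IsTransMatrix p) (i j : 𝒳) : p i j ≤ 1 :=
  hp.2 i ▸ (hp.summable_row i).le_tsum j fun k _ => hp.1 i k

theorem mul (hq : IsTransMatrix q) (hp : IsTransMatrix p) :
    IsTransMatrix fun i j => ∑' k, q i k * p k j := by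
  refine ⟨fun i j => tsum_nonneg fun k => mul_nonneg (hq.1 i k) (hp.1 k j), fun i => ?_⟩
  have hrow : ∀ k, ∑' j, q i k * p k j = q i k := fun k => by
    rw [tsum_mul_left, hp.2 k, mul_one]
  have hnonneg : 0 ≤ Function.uncurry fun k j => q i k * p k j := fun x =>
    mul_nonneg (hq.1 i x.1) (hp.1 x.1 x.2)
  have hsum : Summable (Function.uncurry fun k j => q i k * p k j) := by
    rw [summable_prod_of_nonneg hnonneg]
    refine ⟨fun k => (hp.summable_row k).mul_left (q i k), ?_⟩
    simpa only [Function.uncurry_apply_pair, hrow] using hq.summable_row i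
  have hcol : ∀ j, Summable fun k => q i k * p k j := fun j =>
    (hq.summable_row i).of_nonneg_of_le (fun k => mul_nonneg (hq.1 i k) (hp.1 k j))
      fun k => mul_le_of_le_one_right (hq.1 i k) (hp.le_one k j)
  rw [hsum.tsum_comm' (fun k => (hp.summable_row k).mul_left (q i k)) hcol]
  simpa only [hrow] using hq.2 i

theorem matPow (hp : IsTransMatrix p) : ∀ t, IsTransMatrix (_root_.matPow p t)
  | 0 => ⟨fun i j => by simp only [_root_.matPow]; split_ifs <;> norm_num,
      fun i => by simp [_root_.matPow]⟩
  | t + 1 => (hp.matPow t).mul hp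

theorem eq_of_weighted_eq {p' : 𝒳 → 𝒳 → ℝ} {π π' : 𝒳 → ℝ}
    (hp : IsTransMatrix p) (hp' : IsTransMatrix p') (hπ : ∀ i, 0 < π i)
    (h : ∀ i j, π i * p i j = π' i * p' i j) : p = p' := by
  funext i j
  have hπi : π i = π' i := by
    have hrow : ∑' j, π i * p i j = ∑' j, π' i * p' i j := tsum_congr (h i)
    rwa [tsum_mul_left, tsum_mul_left, hp.2, hp'.2, mul_one, mul_one] at hrow
  exact mul_left_cancel₀ (hπ i).ne' ((h i j).trans (by rw [hπi]))

end IsTransMatrix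

theorem IsProbVector.summable {𝒳 : Type*} {π : 𝒳 → ℝ} (hπ : IsProbVector π) : Summable π := by
  by_contra h
  simpa [tsum_eq_zero_of_not_summable h] using hπ.2

theorem IsErgodic.tendsto_matPow {𝒳 : Type*} {p : 𝒳 → 𝒳 → ℝ} {π : 𝒳 → ℝ}
    (herg : IsErgodic p π) (hp : IsTransMatrix p) (hπ : IsProbVector π) (i j : 𝒳) :
    Tendsto (fun t => matPow p t i j) atTop (𝓝 (π j)) := by
  have hδ : IsProbVector fun k => if k = i then (1 : ℝ) else 0 :=
    ⟨fun k => by dsimp only; split_ifs <;> norm_num, tsum_ite_eq i fun _ => 1⟩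
  have hrow : ∀ t k, ∑' l, (if l = i then (1 : ℝ) else 0) * matPow p t l k = matPow p t i k :=
    fun t k => by simp only [ite_mul, one_mul, zero_mul, tsum_ite_eq]
  have hdiff : ∀ t, Summable fun k => |matPow p t i k - π k| := fun t =>
    ((hp.matPow t).summable_row i |>.add hπ.summable).of_nonneg_of_le (fun _ => abs_nonneg _)
      fun k => (abs_sub _ _).trans_eq <| by
        rw [abs_of_nonneg ((hp.matPow t).1 i k), abs_of_nonneg (hπ.1 k)]
  have htv : Tendsto (fun t => ∑' k, |matPow p t i k - π k|) atTop (𝓝 0) := by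
    simpa only [hrow] using herg _ hδ
  rw [tendsto_iff_dist_tendsto_zero]
  exact squeeze_zero (fun _ => dist_nonneg)
    (fun t => (hdiff t).le_tsum j fun _ _ => abs_nonneg _) htv

theorem measurable_matPow {α 𝒳 : Type*} [MeasurableSpace α] [Countable 𝒳]
    {p : α → 𝒳 → 𝒳 → ℝ} (hp : ∀ i j, Measurable fun a => p a i j) :
    ∀ t i j, Measurable fun a => matPow (p a) t i j
  | 0, _, _ => measurable_const
  | t + 1, i, j => Measurable.tsum fun k => (measurable_matPow hp t i k).mul (hp k j)

theorem measurable_of_isErgodic {α 𝒳 : Type*} [MeasurableSpace α] [Countable 𝒳]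
    {p : α → 𝒳 → 𝒳 → ℝ} {π : α → 𝒳 → ℝ} (hp : ∀ a, IsTransMatrix (p a))
    (hmeas : ∀ i j, Measurable fun a => p a i j) (hπ : ∀ a, IsProbVector (π a))
    (herg : ∀ a, IsErgodic (p a) (π a)) (j : 𝒳) : Measurable fun a => π a j :=
  measurable_of_tendsto_metrizable (measurable_matPow hmeas · j j) <|
    tendsto_pi_nhds.2 fun a => (herg a).tendsto_matPow (hp a) (hπ a) j j

theorem measurable_piecewise_of_measurable_restrict {α β : Type*} [MeasurableSpace α]
    [MeasurableSpace β] {s : Set α} [DecidablePred (· ∈ s)] (hs : MeasurableSet s) {f g : α → β}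
    (hf : Measurable fun a : s => f a) (hg : Measurable g) : Measurable (s.piecewise f g) := by
  refine measurable_of_restrict_of_restrict_compl hs ?_ ?_
  · convert hf using 1
    exact funext fun a => s.piecewise_eq_of_mem f g a.2
  · convert hg.comp (measurable_subtype_coe (p := (· ∈ sᶜ))) using 1
    exact funext fun a => s.piecewise_eq_of_notMem f g a.2

theorem measurable_of_measurable_marginals {α E : Type*} [MeasurableSpace α] [MeasurableSpace E]
    {μ : α → Measure (ℕ → E)} [∀ a, IsFiniteMeasure (μ a)]
    (h : ∀ (n : ℕ) (A : Set (Fin (n + 1) → E)), MeasurableSet A →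
      Measurable fun a => μ a {ω | (fun t : Fin (n + 1) => ω t) ∈ A}) :
    Measurable μ := by
  refine .measure_of_isPiSystem generateFrom_measurableCylinders.symm
    isPiSystem_measurableCylinders (fun C hC => ?_) (by simpa using h 0 .univ .univ)
  obtain ⟨s, B, hB, rfl⟩ := (mem_measurableCylinders C).1 hC
  -- a cylinder over the coordinates `s` is a cylinder over the initial segment `0, …, max s`
  have hlt : ∀ i : s, (i : ℕ) < s.sup id + 1 := fun i => Nat.lt_succ_of_le (s.le_sup (f := id) i.2)
  exact h (s.sup id) ((fun x (i : s) => x ⟨i, hlt i⟩) ⁻¹' B)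
    (hB.preimage (measurable_pi_lambda _ fun i => measurable_pi_apply _))

theorem exists_isMarkovKernel_eqOn {α β : Type*} [MeasurableSpace α] [MeasurableSpace β]
    {s : Set α} (hs : MeasurableSet s) (hne : s.Nonempty) {μ : α → Measure β}
    (hμ : ∀ a ∈ s, IsProbabilityMeasure (μ a)) (hmeas : Measurable fun a : s => μ a) :
    ∃ κ : Kernel α β, IsMarkovKernel κ ∧ ∀ a ∈ s, κ a = μ a := by
  obtain ⟨a₀, ha₀⟩ := hne
  refine ⟨⟨s.piecewise μ fun _ => μ a₀, measurable_piecewise_of_measurable_restrict hs hmeas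
    measurable_const⟩, ⟨fun a => ?_⟩, fun a ha => if_pos ha⟩
  by_cases ha : a ∈ s
  · simpa [ha] using hμ a ha
  · simpa [ha] using hμ a₀ ha₀

theorem TendstoInProb.tendstoInMeasure {Ω : Type*} [MeasurableSpace Ω] {P : Measure Ω}
    {Z : ℕ → Ω → ℝ} {c : ℝ} (h : TendstoInProb P Z c) :
    TendstoInMeasure P Z atTop fun _ => c := by
  refine tendstoInMeasure_iff_dist.2 fun ε hε => ?_
  refine tendsto_of_tendsto_of_tendsto_of_le_of_le tendsto_const_nhds (h (ε / 2) (half_pos hε))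
    (fun _ => zero_le) fun T => measure_mono fun ω hω => ?_
  exact (half_lt_self hε).trans_le hω

theorem tendstoInMeasure_compProd {α β E ι : Type*} [MeasurableSpace α] [MeasurableSpace β]
    [PseudoEMetricSpace E] [MeasurableSpace E] [OpensMeasurableSpace E] [SecondCountableTopology E]
    {μ : Measure α} [IsFiniteMeasure μ] {κ : Kernel α β} [IsFiniteKernel κ]
    {l : Filter ι} [l.IsCountablyGenerated] {f : ι → β → E} {c : α → E}
    (hf : ∀ n, Measurable (f n)) (hc : Measurable c)
    (h : ∀ᵐ a ∂μ, TendstoInMeasure (κ a) f l fun _ => c a) :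
    TendstoInMeasure (μ ⊗ₘ κ) (fun n z => f n z.2) l fun z => c z.1 := by
  intro ε hε
  have hmeas : ∀ n, MeasurableSet {z : α × β | ε ≤ edist (f n z.2) (c z.1)} := fun n =>
    measurableSet_le measurable_const (((hf n).comp measurable_snd).edist (hc.comp measurable_fst))
  simp_rw [Measure.compProd_apply (hmeas _)]
  simpa using tendsto_lintegral_filter_of_dominated_convergence (fun _ => κ.bound)
    (.of_forall fun n => Kernel.measurable_kernel_prodMk_left (hmeas n))
    (.of_forall fun n => ae_of_all _ fun a => κ.measure_le_bound a _)
    (by simp [ENNReal.mul_eq_top, κ.bound_ne_top]) (h.mono fun a ha => ha ε hε)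

theorem TendstoInMeasure.exists_measurable_comp_ae_eq {γ β : Type*} [MeasurableSpace γ]
    [MeasurableSpace β] {ν : Measure γ} {φ : γ → β} {f : ℕ → β → ℝ} {g : γ → ℝ}
    (hf : ∀ n, Measurable (f n)) (h : TendstoInMeasure ν (fun n z => f n (φ z)) atTop g) :
    ∃ F : β → ℝ, Measurable F ∧ ∀ᵐ z ∂ν, F (φ z) = g z := by
  obtain ⟨ns, -, hns⟩ := h.exists_seq_tendsto_ae
  exact ⟨fun b => limsup (fun k => f (ns k) b) atTop, .limsup fun k => hf (ns k),
    hns.mono fun z hz => hz.limsup_eq⟩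

theorem exists_measurable_ae_eq_fst_of_tendstoInMeasure {α β ι : Type*} [MeasurableSpace α]
    [StandardBorelSpace α] [Nonempty α] [MeasurableSpace β] [Countable ι]
    {μ : Measure α} [IsFiniteMeasure μ] {κ : Kernel α β} [IsFiniteKernel κ]
    {s : Set α} (hs : MeasurableSet s) (hμs : ∀ᵐ a ∂μ, a ∈ s)
    {c : ι → α → ℝ} (hc : ∀ i, Measurable fun a : s => c i a) (hinj : s.InjOn fun a i => c i a)
    {f : ι → ℕ → β → ℝ} (hf : ∀ i n, Measurable (f i n))
    (hlim : ∀ i, ∀ a ∈ s, TendstoInMeasure (κ a) (f i) atTop fun _ => c i a) :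
    ∃ g : β → α, Measurable g ∧ ∀ᵐ z ∂(μ ⊗ₘ κ), g z.2 = z.1 := by
  have hF : ∀ i, ∃ F : β → ℝ, Measurable F ∧
      ∀ᵐ z ∂(μ ⊗ₘ κ), F z.2 = s.piecewise (c i) 0 z.1 := fun i =>
    TendstoInMeasure.exists_measurable_comp_ae_eq (hf i) <| tendstoInMeasure_compProd (hf i)
      (measurable_piecewise_of_measurable_restrict hs (hc i) measurable_const)
      (hμs.mono fun a ha => by rw [s.piecewise_eq_of_mem _ _ ha]; exact hlim i a ha)
  choose F hFmeas hF using hF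
  -- on the standard Borel set `s`, the injective map `a ↦ (c i a)ᵢ` has a measurable left inverse
  have := hs.standardBorel
  have hemb : MeasurableEmbedding (s.domRestrict fun a i => c i a) :=
    (measurable_pi_lambda _ hc).measurableEmbedding hinj.injective
  obtain ⟨G, hGmeas, hG⟩ :=
    hemb.exists_measurable_extend measurable_subtype_coe fun _ => inferInstance
  have hs' : ∀ᵐ z ∂(μ ⊗ₘ κ), z.1 ∈ s :=
    Measure.ae_compProd_of_ae_ae (measurable_fst hs) (hμs.mono fun _ ha => ae_of_all _ fun _ => ha)
  refine ⟨G ∘ fun b i => F i b, hGmeas.comp (measurable_pi_lambda _ hFmeas), ?_⟩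
  filter_upwards [ae_all_iff.2 hF, hs'] with z hz hzs
  simpa [hz, hzs] using congrFun hG ⟨z.1, hzs⟩

theorem MeasureTheory.Integrable.tendsto_ae_condExp_pi {Ω ι : Type*} [Fintype ι]
    {m0 : MeasurableSpace Ω} {μ : Measure Ω} [IsFiniteMeasure μ] {ℱ : Filtration ℕ m0}
    {g : Ω → ι → ℝ} (hg : Integrable g μ) (hgm : StronglyMeasurable[⨆ n, ℱ n] g) :
    ∀ᵐ x ∂μ, Tendsto (fun n => μ[g | ℱ n] x) atTop (𝓝 (g x)) := by
  have hcoord : ∀ i n, ∀ᵐ x ∂μ, μ[g | ℱ n] x i = μ[fun y => g y i | ℱ n] x := fun i n =>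
    (ContinuousLinearMap.proj i).comp_condExp_comm hg
  have hlim : ∀ i, ∀ᵐ x ∂μ, Tendsto (fun n => μ[fun y => g y i | ℱ n] x) atTop (𝓝 (g x i)) :=
    fun i => (hg.eval i).tendsto_ae_condExp ((continuous_apply i).comp_stronglyMeasurable hgm)
  filter_upwards [ae_all_iff.2 fun i => ae_all_iff.2 (hcoord i), ae_all_iff.2 hlim] with x hx hlx
  exact tendsto_pi_nhds.2 fun i => by simpa only [hx i] using hlx i

def coordFiltration (α E : Type*) [MeasurableSpace α] [MeasurableSpace E] :
    Filtration ℕ (inferInstance : MeasurableSpace (α × (ℕ → E))) where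
  seq n := ⨆ k : Fin (n + 1), MeasurableSpace.comap (fun z : α × (ℕ → E) => z.2 k) inferInstance
  mono' _ _ h := iSup_le fun k => le_iSup_of_le (Fin.castLE (by omega) k) le_rfl
  le' _ := iSup_le fun k => ((measurable_pi_apply (k : ℕ)).comp measurable_snd).comap_le

theorem iSup_coordFiltration (α E : Type*) [MeasurableSpace α] [MeasurableSpace E] :
    ⨆ n, coordFiltration α E n = MeasurableSpace.comap Prod.snd inferInstance := by
  simp only [MeasurableSpace.pi, MeasurableSpace.comap_iSup, MeasurableSpace.comap_comp]
  refine le_antisymm (iSup_le fun n => iSup_le fun k => le_iSup_of_le (k : ℕ) le_rfl) ?_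
  exact iSup_le fun k => le_iSup_of_le k (le_iSup_of_le (Fin.last k) le_rfl)

theorem tendsto_condExp_coordFiltration {α E ι : Type*} [MeasurableSpace α] [MeasurableSpace E]
    [Fintype ι] {μ : Measure (α × (ℕ → E))} [IsFiniteMeasure μ] {X : α × (ℕ → E) → ι → ℝ}
    (hX : Integrable X μ) {g : (ℕ → E) → ι → ℝ} (hg : Measurable g)
    (hgX : ∀ᵐ z ∂μ, g z.2 = X z) :
    ∀ᵐ z ∂μ, Tendsto (fun n => μ[X | coordFiltration α E n] z) atTop (𝓝 (X z)) := by
  have hgm : StronglyMeasurable[⨆ n, coordFiltration α E n] fun z => g z.2 := by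
    rw [iSup_coordFiltration]
    exact (hg.comp (comap_measurable Prod.snd)).stronglyMeasurable
  have hcond : ∀ n, μ[fun z => g z.2 | coordFiltration α E n] =ᵐ[μ] μ[X | coordFiltration α E n] :=
    fun n => condExp_congr_ae hgX
  filter_upwards [(hX.congr (hgX.mono fun _ h => h.symm)).tendsto_ae_condExp_pi hgm,
    ae_all_iff.2 hcond, hgX] with z hz hcz hgz
  simpa only [hcz, hgz] using hz

def pairFrequency {E : Type*} [DecidableEq E] (i j : E) (T : ℕ) (ω : ℕ → E) : ℝ :=
  (T : ℝ)⁻¹ * ∑ s ∈ Finset.range T, if ω s = i ∧ ω (s + 1) = j then (1 : ℝ) else 0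

theorem measurable_pairFrequency {E : Type*} [DecidableEq E] [MeasurableSpace E]
    [MeasurableSingletonClass E]
    (i j : E) (T : ℕ) : Measurable (pairFrequency i j T) := by
  refine (Finset.measurable_sum _ fun s _ => Measurable.ite ?_ measurable_const
    measurable_const).const_mul _
  exact ((measurableSet_singleton i).preimage (measurable_pi_apply s)).inter
    ((measurableSet_singleton j).preimage (measurable_pi_apply (s + 1)))

theorem bayesian_estimator_consistent_general
    (S : Set ℝ) (hS : S.Countable) (m : ℕ)
    (Θ : Set (Fin m → ℝ)) (hΘ : MeasurableSet Θ)
    (Q : Measure (Fin m → ℝ)) [IsProbabilityMeasure Q] (hQΘ : Q Θᶜ = 0)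
    (hQint : Integrable (fun θ => θ) Q)
    (p : (Fin m → ℝ) → ↥S → ↥S → ℝ)
    (hp : ∀ θ ∈ Θ, IsTransMatrix (p θ))
    (hpmeas : ∀ i j : ↥S, Measurable fun θ : Θ => p θ i j)
    (Pθ : (Fin m → ℝ) → Measure (ℕ → ↥S))
    (hPθprob : ∀ θ ∈ Θ, IsProbabilityMeasure (Pθ θ))
    (hPθmeas : ∀ (n : ℕ) (A : Set (Fin (n + 1) → ↥S)),
      Measurable fun θ : Θ => Pθ θ {ω | (fun t : Fin (n + 1) => ω t) ∈ A})
    (P : Measure ((Fin m → ℝ) × (ℕ → ↥S)))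
    (hP : ∀ (s : Set (Fin m → ℝ)) (t : Set (ℕ → ↥S)),
      MeasurableSet s → MeasurableSet t → P (s ×ˢ t) = ∫⁻ θ in s, Pθ θ t ∂Q)
    (hdist : ∀ θ ∈ Θ, ∀ θ' ∈ Θ, θ ≠ θ' → ∃ i j, p θ i j ≠ p θ' i j)
    (π : (Fin m → ℝ) → ↥S → ℝ)
    (hπ : ∀ θ ∈ Θ, IsProbVector (π θ))
    (herg : ∀ θ ∈ Θ, IsErgodic (p θ) (π θ))
    (hπpos : ∀ θ ∈ Θ, ∀ i, 0 < π θ i)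
    (hLLN : ∀ θ ∈ Θ, ∀ i j : ↥S,
      TendstoInProb (Pθ θ)
        (fun T ω => (T : ℝ)⁻¹ * ∑ s ∈ Finset.range T,
          (if ω s = i ∧ ω (s + 1) = j then (1 : ℝ) else 0))
        (π θ i * p θ i j)) :
    ∀ᵐ z ∂P, Tendsto
      (fun n => (P[fun z : (Fin m → ℝ) × (ℕ → ↥S) => z.1 |
          ⨆ k : Fin (n + 1),
            MeasurableSpace.comap (fun z : (Fin m → ℝ) × (ℕ → ↥S) => z.2 k)
              inferInstance]) z)
      atTop (𝓝 z.1) := by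
  have := hS.to_subtype
  have hΘae : ∀ᵐ θ ∂Q, θ ∈ Θ := hQΘ
  have hΘne : Θ.Nonempty :=
    nonempty_of_measure_ne_zero (μ := Q) (by simp [(prob_compl_eq_zero_iff hΘ).1 hQΘ])
  have : ∀ θ : Θ, IsProbabilityMeasure (Pθ θ) := fun θ => hPθprob θ θ.2
  obtain ⟨κ, hκ, hκΘ⟩ := exists_isMarkovKernel_eqOn hΘ hΘne hPθprob
    (measurable_of_measurable_marginals fun n A _ => hPθmeas n A)
  have hPκ : Q ⊗ₘ κ = P := Measure.ext_prod fun hs ht => by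
    rw [hP _ _ hs ht, Measure.compProd_apply_prod hs ht]
    exact setLIntegral_congr_fun_ae hs (hΘae.mono fun θ hθ _ => by rw [hκΘ θ hθ])
  have hπmeas := measurable_of_isErgodic (fun θ : Θ => hp θ θ.2) hpmeas (fun θ => hπ θ θ.2)
    fun θ => herg θ θ.2
  have hinj : Θ.InjOn fun θ (q : S × S) => π θ q.1 * p θ q.1 q.2 := fun θ hθ θ' hθ' h => by
    by_contra hne
    obtain ⟨i, j, hij⟩ := hdist θ hθ θ' hθ' hne
    exact hij <| congr_fun₂ ((hp θ hθ).eq_of_weighted_eq (hp θ' hθ') (hπpos θ hθ)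
      fun i j => congrFun h (i, j)) i j
  obtain ⟨g, hg, hgθ⟩ := exists_measurable_ae_eq_fst_of_tendstoInMeasure hΘ hΘae
    (fun q => (hπmeas q.1).mul (hpmeas q.1 q.2)) hinj (fun q => measurable_pairFrequency q.1 q.2)
    fun q θ hθ => hκΘ θ hθ ▸ (hLLN θ hθ q.1 q.2).tendstoInMeasure
  have hint : Integrable (fun z => z.1) (Q ⊗ₘ κ) := by
    rw [← Measure.fst_compProd Q κ] at hQint
    exact hQint.comp_measurable measurable_fst
  subst hPκ
  exact tendsto_condExp_coordFiltration hint hg hgθ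

/-- consistency of the Bayesian estimator for an ergodic Markov chain.
Under distinguishability of the transition matrices, ergodicity with everywhere positive
limiting invariant distributions, and the weak LLN for pair frequencies, the Bayesian
estimator `θ̂_n = E_P[θ | σ(X_0,…,X_n)]` converges to `θ`, `P`-almost surely on `Θ × Ω`,
where `P(dθ,dω) = Q(dθ) P^θ(dω)`. -/
theorem bayesian_estimator_consistent
    (S : Set ℝ) (hS : S.Countable) (m : ℕ)
    (Θ : Set (Fin m → ℝ)) (hΘ : MeasurableSet Θ)
    (Q : Measure (Fin m → ℝ)) [IsProbabilityMeasure Q] (hQΘ : Q Θᶜ = 0)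
    (hQint : Integrable (fun θ => θ) Q)
    (p : (Fin m → ℝ) → ↥S → ↥S → ℝ)
    (hp : ∀ θ ∈ Θ, IsTransMatrix (p θ))
    (hpmeas : ∀ i j : ↥S, Measurable fun θ : Θ => p θ i j)
    (Pθ : (Fin m → ℝ) → Measure (ℕ → ↥S))
    (hPθprob : ∀ θ ∈ Θ, IsProbabilityMeasure (Pθ θ))
    (hPθMC : ∀ θ ∈ Θ, IsMarkovChain (Pθ θ) (fun n ω => ω n) (p θ))
    (hPθmeas : ∀ (n : ℕ) (A : Set (Fin (n + 1) → ↥S)),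
      Measurable fun θ : Θ => Pθ θ {ω | (fun t : Fin (n + 1) => ω t) ∈ A})
    (P : Measure ((Fin m → ℝ) × (ℕ → ↥S))) [IsProbabilityMeasure P]
    (hP : ∀ (s : Set (Fin m → ℝ)) (t : Set (ℕ → ↥S)),
      MeasurableSet s → MeasurableSet t → P (s ×ˢ t) = ∫⁻ θ in s, Pθ θ t ∂Q)
    (hdist : ∀ θ ∈ Θ, ∀ θ' ∈ Θ, θ ≠ θ' → ∃ i j, p θ i j ≠ p θ' i j)
    (π : (Fin m → ℝ) → ↥S → ℝ)
    (hπ : ∀ θ ∈ Θ, IsProbVector (π θ))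
    (herg : ∀ θ ∈ Θ, IsErgodic (p θ) (π θ))
    (hπpos : ∀ θ ∈ Θ, ∀ i, 0 < π θ i)
    (hLLN : ∀ θ ∈ Θ, ∀ i j : ↥S,
      TendstoInProb (Pθ θ)
        (fun T ω => (T : ℝ)⁻¹ * ∑ s ∈ Finset.range T,
          (if ω s = i ∧ ω (s + 1) = j then (1 : ℝ) else 0))
        (π θ i * p θ i j)) :
    ∀ᵐ z ∂P, Tendsto
      (fun n => (P[fun z : (Fin m → ℝ) × (ℕ → ↥S) => z.1 |
          ⨆ k : Fin (n + 1),
            MeasurableSpace.comap (fun z : (Fin m → ℝ) × (ℕ → ↥S) => z.2 k)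
              inferInstance]) z)
      atTop (𝓝 z.1) :=
  bayesian_estimator_consistent_general S hS m Θ hΘ Q hQΘ hQint p hp hpmeas Pθ hPθprob hPθmeas P hP
    hdist π hπ herg hπpos hLLN
end
end

section
/- Let 𝒳 be a countable set, (Ω, 𝓕, P) a probability space, X : ℕ → Ω → 𝒳 a sequence of random variables, Y_s = (X_s, X_{s+1}), and μ a probability vector on 𝒳 × 𝒳. Then the following are equivalent: (a) for all subsets A, B ⊆ 𝒳, (1/T) ∑_{s=0}^{T-1} 1(X_s ∈ A, X_{s+1} ∈ B) converges in P-probability to ∑_{(i,j) ∈ A × B} μ(i,j) as T → ∞; (b) for every bounded function g : 𝒳 × 𝒳 → ℝ, (1/T) ∑_{s=0}^{T-1} g(Y_s) converges in P-probability to ∑_{(i,j)} g(i,j) μ(i,j) as T → ∞. -/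
/-!
Indicators of rectangles include the point masses `1_{y}` and the constant `1`, and
convergence in probability is stable under finite linear combinations. A function `g` with
`|g| ≤ C` differs from `g · 1_F` by at most `C · 1_{Fᶜ} = C · (1 - ∑_{y ∈ F} 1_{y})`, whose
empirical mean converges to `C μ(Fᶜ)`; this is small for a large finite `F` because `μ` is
summable. The converse holds because indicators of rectangles are bounded.
-/

open MeasureTheory ProbabilityTheory Filter Topology
open scoped Classical

noncomputable section

namespace TendstoInProb

variable {Ω : Type*} [MeasurableSpace Ω] {P : Measure Ω} {V Z W : ℕ → Ω → ℝ} {a b c : ℝ}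

theorem tendsto_measure_of_abs_sub_le (hZ : TendstoInProb P Z a) (hW : TendstoInProb P W b)
    {ε δ r : ℝ} (hδ : 0 < δ) (hr : r + 2 * δ ≤ ε)
    (h : ∀ T ω, |V T ω - c| ≤ |Z T ω - a| + |W T ω - b| + r) :
    Tendsto (fun T => P {ω | ε < |V T ω - c|}) atTop (𝓝 0) := by
  have hsub : ∀ T, {ω | ε < |V T ω - c|} ⊆ {ω | δ < |Z T ω - a|} ∪ {ω | δ < |W T ω - b|} := by
    intro T ω hω
    by_contra hc
    simp only [Set.mem_union, Set.mem_ofPred_eq, not_or, not_lt] at hω hc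
    linarith [h T ω]
  refine tendsto_of_tendsto_of_tendsto_of_le_of_le tendsto_const_nhds ?_ (fun _ => zero_le)
    (fun T => (measure_mono (hsub T)).trans (measure_union_le _ _))
  simpa using (hZ δ hδ).add (hW δ hδ)

theorem add (hZ : TendstoInProb P Z a) (hW : TendstoInProb P W b) :
    TendstoInProb P (fun T ω => Z T ω + W T ω) (a + b) := fun ε hε =>
  hZ.tendsto_measure_of_abs_sub_le hW (half_pos hε) (r := 0) (by linarith) fun T ω => by
    rw [add_zero, add_sub_add_comm]
    exact abs_add_le _ _

theorem sub (hZ : TendstoInProb P Z a) (hW : TendstoInProb P W b) :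
    TendstoInProb P (fun T ω => Z T ω - W T ω) (a - b) := fun ε hε =>
  hZ.tendsto_measure_of_abs_sub_le hW (half_pos hε) (r := 0) (by linarith) fun T ω => by
    rw [add_zero, sub_sub_sub_comm]
    exact abs_sub _ _

theorem const_mul (hZ : TendstoInProb P Z a) (c : ℝ) :
    TendstoInProb P (fun T ω => c * Z T ω) (c * a) := by
  rcases eq_or_ne c 0 with rfl | hc
  · intro ε hε
    simp [hε.not_gt]
  · intro ε hε
    have hc' : 0 < |c| := abs_pos.2 hc
    have hset : ∀ T, {ω | ε < |c * Z T ω - c * a|} = {ω | ε / |c| < |Z T ω - a|} := by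
      intro T
      ext ω
      rw [Set.mem_ofPred_eq, Set.mem_ofPred_eq, ← mul_sub, abs_mul, div_lt_iff₀' hc']
    simpa only [hset] using hZ (ε / |c|) (div_pos hε hc')

theorem finset_sum {ι : Type*} (s : Finset ι) {Z : ι → ℕ → Ω → ℝ} {a : ι → ℝ}
    (h : ∀ i ∈ s, TendstoInProb P (Z i) (a i)) :
    TendstoInProb P (fun T ω => ∑ i ∈ s, Z i T ω) (∑ i ∈ s, a i) := by
  induction s using Finset.induction_on with
  | empty =>
    intro ε hε
    simp [hε.not_gt]
  | insert i s hi ih =>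
    simp only [Finset.sum_insert hi]
    exact (h i (s.mem_insert_self i)).add (ih fun j hj => h j (Finset.mem_insert_of_mem hj))

theorem of_approx
    (h : ∀ δ > 0, ∃ (Z W : ℕ → Ω → ℝ) (a b : ℝ), TendstoInProb P Z a ∧ TendstoInProb P W b ∧
      |a - c| ≤ δ ∧ b ≤ δ ∧ ∀ T ω, |V T ω - Z T ω| ≤ W T ω) :
    TendstoInProb P V c := by
  intro ε hε
  obtain ⟨Z, W, a, b, hZ, hW, hac, hb, hVZ⟩ := h (ε / 4) (by positivity)
  refine hZ.tendsto_measure_of_abs_sub_le hW (by positivity : (0 : ℝ) < ε / 4)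
    (r := 2 * (ε / 4)) (by linarith) fun T ω => ?_
  linarith [abs_sub_le (V T ω) (Z T ω) c, abs_sub_le (Z T ω) a c, hVZ T ω,
    le_abs_self (W T ω - b)]

end TendstoInProb

section EmpiricalMean

variable {Ω α : Type*} {Y : ℕ → Ω → α} {ν : α → ℝ} {f g h : α → ℝ}

def empiricalMean (Y : ℕ → Ω → α) (f : α → ℝ) (T : ℕ) (ω : Ω) : ℝ :=
  (T : ℝ)⁻¹ * ∑ s ∈ Finset.range T, f (Y s ω)

def SatisfiesLLN [MeasurableSpace Ω] (P : Measure Ω) (Y : ℕ → Ω → α) (ν : α → ℝ) (f : α → ℝ) :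
    Prop :=
  TendstoInProb P (empiricalMean Y f) (∑' y, f y * ν y)

theorem empiricalMean_sub (T : ℕ) (ω : Ω) :
    empiricalMean Y (fun y => f y - g y) T ω = empiricalMean Y f T ω - empiricalMean Y g T ω := by
  simp only [empiricalMean, Finset.sum_sub_distrib, mul_sub]

theorem empiricalMean_const_mul (c : ℝ) (T : ℕ) (ω : Ω) :
    empiricalMean Y (fun y => c * f y) T ω = c * empiricalMean Y f T ω := by
  simp only [empiricalMean, ← Finset.mul_sum, mul_left_comm]

theorem empiricalMean_finset_sum {ι : Type*} (s : Finset ι) (f : ι → α → ℝ) (T : ℕ) (ω : Ω) :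
    empiricalMean Y (fun y => ∑ i ∈ s, f i y) T ω = ∑ i ∈ s, empiricalMean Y (f i) T ω := by
  simp only [empiricalMean, Finset.mul_sum]
  exact Finset.sum_comm

theorem abs_empiricalMean_le (hfh : ∀ y, |f y| ≤ h y) (T : ℕ) (ω : Ω) :
    |empiricalMean Y f T ω| ≤ empiricalMean Y h T ω := by
  rw [empiricalMean, empiricalMean, abs_mul, abs_inv, Nat.abs_cast]
  gcongr
  exact (Finset.abs_sum_le_sum_abs _ _).trans (Finset.sum_le_sum fun s _ => hfh _)

theorem summable_mul_of_abs_le (hν0 : ∀ y, 0 ≤ ν y) (hν : Summable ν) {C : ℝ}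
    (hf : ∀ y, |f y| ≤ C) : Summable fun y => f y * ν y :=
  (hν.mul_left C).of_norm_bounded fun y => by
    rw [Real.norm_eq_abs, abs_mul, abs_of_nonneg (hν0 y)]
    exact mul_le_mul_of_nonneg_right (hf y) (hν0 y)

namespace SatisfiesLLN

variable [MeasurableSpace Ω] {P : Measure Ω}

theorem sub (hf : SatisfiesLLN P Y ν f) (hg : SatisfiesLLN P Y ν g)
    (hfν : Summable fun y => f y * ν y) (hgν : Summable fun y => g y * ν y) :
    SatisfiesLLN P Y ν (fun y => f y - g y) := by
  unfold SatisfiesLLN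
  simp_rw [funext₂ empiricalMean_sub, sub_mul, hfν.tsum_sub hgν]
  exact TendstoInProb.sub hf hg

theorem const_mul (hf : SatisfiesLLN P Y ν f) (c : ℝ) :
    SatisfiesLLN P Y ν (fun y => c * f y) := by
  unfold SatisfiesLLN
  simp_rw [funext₂ (empiricalMean_const_mul c), mul_assoc, tsum_mul_left]
  exact TendstoInProb.const_mul hf c

theorem finset_sum {ι : Type*} (s : Finset ι) {f : ι → α → ℝ}
    (hf : ∀ i ∈ s, SatisfiesLLN P Y ν (f i)) (hfν : ∀ i ∈ s, Summable fun y => f i y * ν y) :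
    SatisfiesLLN P Y ν (fun y => ∑ i ∈ s, f i y) := by
  unfold SatisfiesLLN
  simp_rw [funext₂ (empiricalMean_finset_sum s f), Finset.sum_mul, Summable.tsum_finsetSum hfν]
  exact TendstoInProb.finset_sum s hf

theorem of_approx (hν0 : ∀ y, 0 ≤ ν y) (hgν : Summable fun y => g y * ν y)
    (happrox : ∀ δ > 0, ∃ f h : α → ℝ, SatisfiesLLN P Y ν f ∧ SatisfiesLLN P Y ν h ∧
      Summable (fun y => f y * ν y) ∧ Summable (fun y => h y * ν y) ∧
      (∀ y, |g y - f y| ≤ h y) ∧ ∑' y, h y * ν y ≤ δ) :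
    SatisfiesLLN P Y ν g := by
  refine TendstoInProb.of_approx fun δ hδ => ?_
  obtain ⟨f, h, hf, hh, hfν, hhν, hgfh, hhδ⟩ := happrox δ hδ
  refine ⟨empiricalMean Y f, empiricalMean Y h, ∑' y, f y * ν y, ∑' y, h y * ν y, hf, hh, ?_,
    hhδ, fun T ω => ?_⟩
  · have hdiff : Summable fun y => (f y - g y) * ν y := by
      simpa only [sub_mul] using hfν.sub hgν
    calc |∑' y, f y * ν y - ∑' y, g y * ν y| = |∑' y, (f y - g y) * ν y| := by
          simp only [sub_mul, hfν.tsum_sub hgν]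
      _ ≤ ∑' y, |(f y - g y) * ν y| := by
          simpa only [Real.norm_eq_abs] using norm_tsum_le_tsum_norm hdiff.norm
      _ ≤ ∑' y, h y * ν y := by
          refine hdiff.abs.tsum_le_tsum (fun y => ?_) hhν
          rw [abs_mul, abs_of_nonneg (hν0 y), abs_sub_comm]
          exact mul_le_mul_of_nonneg_right (hgfh y) (hν0 y)
      _ ≤ δ := hhδ
  · rw [← empiricalMean_sub]
    exact abs_empiricalMean_le hgfh T ω

theorem of_abs_le (hν0 : ∀ y, 0 ≤ ν y) (hν : Summable ν)
    (hpoint : ∀ x, SatisfiesLLN P Y ν fun y => if y = x then 1 else 0)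
    (hone : SatisfiesLLN P Y ν fun _ => 1) {C : ℝ} (hg : ∀ y, |g y| ≤ C) :
    SatisfiesLLN P Y ν g := by
  have hpointν : ∀ x, Summable fun y => (if y = x then (1 : ℝ) else 0) * ν y := fun x =>
    summable_mul_of_abs_le hν0 hν (C := 1) fun y => by split_ifs <;> simp
  have hgC : ∀ y, |g y| ≤ |C| := fun y => (hg y).trans (le_abs_self C)
  refine of_approx hν0 (summable_mul_of_abs_le hν0 hν hgC) fun δ hδ => ?_
  obtain ⟨F, hF⟩ : ∃ F : Finset α, C * ∑' y : {x // x ∉ F}, ν y < δ := by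
    have htail := (tendsto_tsum_compl_atTop_zero ν).const_mul C
    rw [mul_zero] at htail
    exact (htail.eventually (gt_mem_nhds hδ)).exists
  have hf : SatisfiesLLN P Y ν fun y => if y ∈ F then g y else 0 := by
    convert finset_sum F (fun x _ => (hpoint x).const_mul (g x))
      (fun x _ => (hpointν x).mul_left (g x) |>.congr fun y => by ring) using 2 with y
    simp [mul_ite]
  have hh : SatisfiesLLN P Y ν fun y => if y ∈ F then 0 else C := by
    convert ((hone.sub (finset_sum F (fun x _ => hpoint x) fun x _ => hpointν x)
      (by simpa using hν) (by simpa only [Finset.sum_mul] using summable_sum fun x _ => hpointν x)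
      ).const_mul C) using 2 with y
    by_cases hy : y ∈ F <;> simp [hy]
  refine ⟨_, _, hf, hh, summable_mul_of_abs_le hν0 hν (C := |C|) fun y => ?_,
    summable_mul_of_abs_le hν0 hν (C := |C|) fun y => ?_, fun y => ?_, ?_⟩
  · split_ifs
    · exact hgC y
    · simp
  · split_ifs <;> simp
  · split_ifs
    · simp
    · simpa using hg y
  · calc ∑' y, (if y ∈ F then 0 else C) * ν y = ∑' y, C * {x | x ∉ F}.indicator ν y := by
          congr 1 with y
          by_cases hy : y ∈ F <;> simp [hy]
      _ = C * ∑' y : {x // x ∉ F}, ν y := by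
          rw [tsum_mul_left]
          exact congrArg _ (tsum_subtype {x | x ∉ F} ν).symm
      _ ≤ δ := hF.le

end SatisfiesLLN

end EmpiricalMean

theorem SatisfiesLLN.of_abs_le_of_rect {Ω α β : Type*} [MeasurableSpace Ω] {P : Measure Ω}
    {Y : ℕ → Ω → α × β} {ν : α × β → ℝ} (hν0 : ∀ y, 0 ≤ ν y) (hν : Summable ν)
    (hrect : ∀ (A : Set α) (B : Set β),
      SatisfiesLLN P Y ν fun y => if y.1 ∈ A ∧ y.2 ∈ B then 1 else 0)
    {g : α × β → ℝ} {C : ℝ} (hg : ∀ y, |g y| ≤ C) :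
    SatisfiesLLN P Y ν g :=
  of_abs_le hν0 hν (fun x => by convert hrect {x.1} {x.2} using 3; simp [Prod.ext_iff])
    (by simpa using hrect Set.univ Set.univ) hg

theorem IsProbVector.summable_s11 {α : Type*} {ν : α → ℝ} (hν : IsProbVector ν) : Summable ν := by
  by_contra hns
  exact one_ne_zero (hν.2.symm.trans (tsum_eq_zero_of_not_summable hns))

theorem pair_LLN_sets_iff_bounded_functions_general
    {𝒳 : Type*}
    {Ω : Type*} [MeasurableSpace Ω] (P : Measure Ω)
    (X : ℕ → Ω → 𝒳)
    (μ : 𝒳 × 𝒳 → ℝ) (hμ : IsProbVector μ) :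
    (∀ A B : Set 𝒳,
      TendstoInProb P
        (fun T ω => (T : ℝ)⁻¹ * ∑ s ∈ Finset.range T,
          (if X s ω ∈ A ∧ X (s + 1) ω ∈ B then (1 : ℝ) else 0))
        (∑' y : 𝒳 × 𝒳, if y.1 ∈ A ∧ y.2 ∈ B then μ y else 0)) ↔
    (∀ g : 𝒳 × 𝒳 → ℝ, (∃ C, ∀ y, |g y| ≤ C) →
      TendstoInProb P
        (fun T ω => (T : ℝ)⁻¹ * ∑ s ∈ Finset.range T, g (X s ω, X (s + 1) ω))
        (∑' y : 𝒳 × 𝒳, g y * μ y)) := by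
  have hmean : ∀ A B : Set 𝒳, (∑' y : 𝒳 × 𝒳, if y.1 ∈ A ∧ y.2 ∈ B then μ y else 0) =
      ∑' y : 𝒳 × 𝒳, (if y.1 ∈ A ∧ y.2 ∈ B then 1 else 0) * μ y := by
    simp only [ite_mul, one_mul, zero_mul, implies_true]
  simp_rw [hmean]
  constructor
  · intro h g ⟨C, hC⟩
    exact SatisfiesLLN.of_abs_le_of_rect (Y := fun s ω => (X s ω, X (s + 1) ω)) hμ.1 hμ.summable_s11
      (fun A B => h A B) hC
  · intro h A B
    exact h (fun y => if y.1 ∈ A ∧ y.2 ∈ B then 1 else 0) ⟨1, fun y => by split_ifs <;> simp⟩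

/-- the weak LLN for pair indicator frequencies over all sets `A, B ⊆ 𝒳`
is equivalent to the weak LLN for `(1/T) ∑ g(Y_s)` over all bounded `g : 𝒳 × 𝒳 → ℝ`,
where `Y_s = (X_s, X_{s+1})`. -/
theorem pair_LLN_sets_iff_bounded_functions
    {𝒳 : Type*} [Countable 𝒳] [MeasurableSpace 𝒳] [MeasurableSingletonClass 𝒳]
    {Ω : Type*} [MeasurableSpace Ω] (P : Measure Ω) [IsProbabilityMeasure P]
    (X : ℕ → Ω → 𝒳) (hX : ∀ n, Measurable (X n))
    (μ : 𝒳 × 𝒳 → ℝ) (hμ : IsProbVector μ) :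
    (∀ A B : Set 𝒳,
      TendstoInProb P
        (fun T ω => (T : ℝ)⁻¹ * ∑ s ∈ Finset.range T,
          (if X s ω ∈ A ∧ X (s + 1) ω ∈ B then (1 : ℝ) else 0))
        (∑' y : 𝒳 × 𝒳, if y.1 ∈ A ∧ y.2 ∈ B then μ y else 0)) ↔
    (∀ g : 𝒳 × 𝒳 → ℝ, (∃ C, ∀ y, |g y| ≤ C) →
      TendstoInProb P
        (fun T ω => (T : ℝ)⁻¹ * ∑ s ∈ Finset.range T, g (X s ω, X (s + 1) ω))
        (∑' y : 𝒳 × 𝒳, g y * μ y)) :=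
  pair_LLN_sets_iff_bounded_functions_general P X μ hμ
end
end
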